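/- Given the jump relations f_n = f_{n+1} − f_{n−1} for n ∈ J_x = {−N, 2−N, …, N} together with the sum constraint Σ_{k∈J_c} f_k = 0, the linear system uniquely determines the control vector (f_k)_{k∈J_c} ∈ ℝ^{N+2} from the jump vector (f_n)_{n∈J_x} ∈ ℝ^{N+1}; equivalently, the (N+2)×(N+2) coefficient matrix F of this system is invertible. -/

import Mathlib

/-!
The difference relations determine a solution up to an additive constant: `f k = f 0 + S k`,
where `S` is the vector of partial sums of the jumps. The zero-sum constraint then reads
`(n + 1) * f 0 + ∑ k, S k = 0`, which fixes `f 0` because `n + 1` is invertible.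
-/

open Finset Fin

theorem Fin.forall_sub_eq_iff_eq_add_partialSum {G : Type*} [AddCommGroup G] {n : ℕ}
    (f : Fin (n + 1) → G) (j : Fin n → G) :
    (∀ i, f i.succ - f i.castSucc = j i) ↔ ∀ k, f k = f 0 + partialSum j k := by
  constructor
  · intro hdiff k
    have hj : (fun i : Fin n => -f i.castSucc + f i.succ) = j :=
      funext fun i => by rw [neg_add_eq_sub, hdiff]
    rw [← hj]
    exact (congrFun (partialSum_left_neg f) k).symm
  · intro hf i
    rw [hf i.succ, hf i.castSucc, partialSum_succ]
    abel

theorem Fin.existsUnique_sub_eq_and_sum_eq_zero {K : Type*} [Field K] [CharZero K] {n : ℕ}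
    (j : Fin n → K) :
    ∃! f : Fin (n + 1) → K, (∀ i, f i.succ - f i.castSucc = j i) ∧ ∑ k, f k = 0 := by
  have sum_eq (c : K) : ∑ k, (c + partialSum j k) = (n + 1) * c + ∑ k, partialSum j k := by
    simp [sum_add_distrib]
  have hn : (n + 1 : K) ≠ 0 := Nat.cast_add_one_ne_zero n
  set c : K := -(∑ k, partialSum j k) / (n + 1)
  have hc : (n + 1) * c + ∑ k, partialSum j k = 0 := by
    rw [mul_div_cancel₀ _ hn, neg_add_cancel]
  refine ⟨fun k => c + partialSum j k, ⟨fun i => ?_, ?_⟩, ?_⟩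
  · simp [partialSum_succ]
  · rw [sum_eq, hc]
  · rintro f ⟨hdiff, hsum⟩
    have hf := (forall_sub_eq_iff_eq_add_partialSum f j).1 hdiff
    have hf0 : f 0 = c := by
      rw [Finset.sum_congr rfl fun k _ => hf k, sum_eq] at hsum
      exact mul_left_cancel₀ hn (by linear_combination hsum - hc)
    funext k
    rw [hf k, hf0]

theorem control_jump_system_unique_solution_general
    (N : ℕ) (j : Fin (N + 1) → ℝ) :
    ∃! fc : Fin (N + 2) → ℝ,
      (∀ n : Fin (N + 1), fc n.succ - fc n.castSucc = j n) ∧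
      (∑ k, fc k = 0) :=
  Fin.existsUnique_sub_eq_and_sum_eq_zero j

/-- The jump relations together with the zero-sum constraint uniquely determine
the `N+2` control inputs from the `N+1` jumps (i.e. the coefficient matrix is
invertible). -/
theorem control_jump_system_unique_solution
    (N : ℕ) (hN : 1 ≤ N) (j : Fin (N + 1) → ℝ) :
    ∃! fc : Fin (N + 2) → ℝ,
      (∀ n : Fin (N + 1), fc n.succ - fc n.castSucc = j n) ∧
      (∑ k, fc k = 0) :=
  control_jump_system_unique_solution_general N j
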